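/- Under the consensus dynamics x(t+1) = (I − L)x(t) − L Δ_σ η with η a random vector of independent zero-mean, unit-variance entries, the deviation z(t) = x(t) − 1_n x̄₀ satisfies E[z(t)] = (I − L − (λ₂/n)1_n 1_nᵀ)^t z(0) → 0 as t → ∞, and E‖z(t)‖² ≤ α^{2t}‖z(0)‖² + (1+α^t)² Σ_{i=1}^n σ_i² E[η_i²]; in particular lim sup_{t→∞} E‖z(t)‖² ≤ Σ_i σ_i² E[η_i²]. -/

import Mathlib

/-!
Put `M = I - L`. It is symmetric, fixes `1`, and preserves the mean-zero subspace, on which its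
quadratic form lies between `(1 - λₙ)‖v‖²` and `(1 - λ₂)‖v‖²`; by polarization `M` is therefore an
`α`-contraction there. Unrolling the recursion gives `z(t) = Mᵗ z(0) - (I - Mᵗ) Δ_σ η`. The noise
term has mean zero, which gives `E[z(t)] = Mᵗ z(0)` (the rank-one term `(λ₂/n) 1 1ᵀ` vanishes on
mean-zero vectors) and `E‖z(t)‖² = ‖Mᵗ z(0)‖² + E‖(I - Mᵗ) Δ_σ η‖²`. Finally `I - Mᵗ` kills
constants and is `p ↦ p - Mᵗ p` on the mean-zero part, so its norm is at most `1 + αᵗ`.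
-/

open Matrix MeasureTheory ProbabilityTheory Filter

section SumZero

variable {ι : Type*} [Fintype ι]

def sumZero (ι : Type*) [Fintype ι] : Submodule ℝ (ι → ℝ) where
  carrier := {v | ∑ i, v i = 0}
  add_mem' hu hv := by simp_all [Finset.sum_add_distrib]
  zero_mem' := by simp
  smul_mem' c v hv := by simp_all [← Finset.mul_sum]

@[simp]
lemma mem_sumZero {v : ι → ℝ} : v ∈ sumZero ι ↔ ∑ i, v i = 0 := Iff.rfl

lemma dotProduct_self_eq_sum_sq (v : ι → ℝ) : v ⬝ᵥ v = ∑ i, v i ^ 2 := by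
  simp [dotProduct, sq]

-- For empty `ι` the mean is `0 / 0 = 0`, and the claim holds trivially.
lemma sub_mean_mem_sumZero (v : ι → ℝ) :
    (v - fun _ => (∑ i, v i) / Fintype.card ι) ∈ sumZero ι := by
  rcases isEmpty_or_nonempty ι with hι | hι
  · simp
  · have : (Fintype.card ι : ℝ) ≠ 0 := Nat.cast_ne_zero.mpr Fintype.card_ne_zero
    simp [Finset.sum_sub_distrib, Finset.card_univ, mul_div_cancel₀ _ this]

lemma dotProduct_self_le_of_sub_mem_sumZero {v p : ι → ℝ} {m : ℝ} (hp : p ∈ sumZero ι)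
    (hv : v = p + m • 1) : p ⬝ᵥ p ≤ v ⬝ᵥ v := by
  have hp1 : p ⬝ᵥ 1 = 0 := by rwa [dotProduct_one]
  have : v ⬝ᵥ v = p ⬝ᵥ p + m ^ 2 * Fintype.card ι := by
    simp only [hv, add_dotProduct, dotProduct_add, smul_dotProduct, dotProduct_smul, hp1,
      dotProduct_comm 1 p, one_dotProduct_one, smul_eq_mul]
    ring
  have : 0 ≤ m ^ 2 * (Fintype.card ι : ℝ) := by positivity
  linarith

lemma Matrix.IsSymm.mulVec_mem_sumZero {M : Matrix ι ι ℝ} (hM : M.IsSymm) (hM1 : M *ᵥ 1 = 1)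
    {v : ι → ℝ} (hv : v ∈ sumZero ι) : M *ᵥ v ∈ sumZero ι := by
  rwa [mem_sumZero, ← one_dotProduct, dotProduct_mulVec, ← hM.eq, vecMul_transpose, hM1,
    one_dotProduct, ← mem_sumZero]

end SumZero

section Iteration

variable {R ι : Type*} [Ring R] [Fintype ι] [DecidableEq ι] {M : Matrix ι ι R}

lemma pow_mulVec_eq_self {v : ι → R} (hv : M *ᵥ v = v) (t : ℕ) : M ^ t *ᵥ v = v := by
  induction t with
  | zero => simp
  | succ t ih => rw [pow_succ', ← mulVec_mulVec, ih, hv]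

lemma pow_mulVec_mem {K : Submodule R (ι → R)} (hK : ∀ v ∈ K, M *ᵥ v ∈ K) {v : ι → R}
    (hv : v ∈ K) (t : ℕ) : M ^ t *ᵥ v ∈ K := by
  induction t with
  | zero => simpa using hv
  | succ t ih => simpa [pow_succ', ← mulVec_mulVec] using hK _ ih

lemma sub_pow_mulVec_of_mem {N : Matrix ι ι R} {K : Submodule R (ι → R)}
    (hK : ∀ v ∈ K, M *ᵥ v ∈ K) (hN : ∀ v ∈ K, N *ᵥ v = 0) {v : ι → R} (hv : v ∈ K) (t : ℕ) :
    (M - N) ^ t *ᵥ v = M ^ t *ᵥ v := by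
  induction t with
  | zero => simp
  | succ t ih =>
    rw [pow_succ', ← mulVec_mulVec, ih, sub_mulVec, hN _ (pow_mulVec_mem hK hv t), sub_zero,
      mulVec_mulVec, ← pow_succ']

lemma eq_pow_mulVec_sub_of_succ_eq {z : ℕ → ι → R} {z₀ w : ι → R} (h0 : z 0 = z₀)
    (hsucc : ∀ t, z (t + 1) = M *ᵥ z t - (1 - M) *ᵥ w) (t : ℕ) :
    z t = M ^ t *ᵥ z₀ - (1 - M ^ t) *ᵥ w := by
  induction t with
  | zero => simp [h0]
  | succ t ih =>
    have : M * (1 - M ^ t) + (1 - M) = 1 - M ^ (t + 1) := by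
      rw [mul_sub, mul_one, ← pow_succ']; abel
    rw [hsucc, ih, mulVec_sub, mulVec_mulVec, mulVec_mulVec, ← pow_succ', ← this, add_mulVec]
    abel

end Iteration

section Contraction

variable {ι : Type*} [Fintype ι]

lemma Matrix.IsSymm.dotProduct_mulVec_comm {M : Matrix ι ι ℝ} (hM : M.IsSymm) (u v : ι → ℝ) :
    u ⬝ᵥ (M *ᵥ v) = v ⬝ᵥ (M *ᵥ u) := by
  rw [dotProduct_mulVec, dotProduct_comm, ← vecMul_transpose, hM.eq]

lemma dotProduct_self_sub_le {p q : ι → ℝ} {c : ℝ} (hc : 0 ≤ c)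
    (hq : q ⬝ᵥ q ≤ c ^ 2 * (p ⬝ᵥ p)) : (p - q) ⬝ᵥ (p - q) ≤ (1 + c) ^ 2 * (p ⬝ᵥ p) := by
  have hcs : (p ⬝ᵥ q) ^ 2 ≤ (p ⬝ᵥ p) * (q ⬝ᵥ q) := by
    simpa only [dotProduct, sq] using Finset.sum_mul_sq_le_sq_mul_sq Finset.univ p q
  have hp : 0 ≤ p ⬝ᵥ p := by simpa using dotProduct_self_star_nonneg p
  have hpq : |p ⬝ᵥ q| ≤ c * (p ⬝ᵥ p) := by
    apply abs_le_of_sq_le_sq _ (by positivity)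
    calc (p ⬝ᵥ q) ^ 2 ≤ (p ⬝ᵥ p) * (c ^ 2 * (p ⬝ᵥ p)) := hcs.trans (by gcongr)
      _ = (c * (p ⬝ᵥ p)) ^ 2 := by ring
  have : (p - q) ⬝ᵥ (p - q) = p ⬝ᵥ p - 2 * (p ⬝ᵥ q) + q ⬝ᵥ q := by
    simp only [sub_dotProduct, dotProduct_sub, dotProduct_comm q p]
    ring
  rw [this]
  nlinarith [neg_abs_le (p ⬝ᵥ q)]

variable {M : Matrix ι ι ℝ} {K : Submodule ℝ (ι → ℝ)} {α : ℝ}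

lemma Matrix.IsSymm.dotProduct_mulVec_polarization (hM : M.IsSymm) (u v : ι → ℝ) (r : ℝ) :
    (r • v + u) ⬝ᵥ (M *ᵥ (r • v + u)) - (r • v - u) ⬝ᵥ (M *ᵥ (r • v - u))
      = 4 * r * (u ⬝ᵥ (M *ᵥ v)) := by
  simp only [mulVec_add, mulVec_sub, mulVec_smul, add_dotProduct, sub_dotProduct,
    dotProduct_add, dotProduct_sub, smul_dotProduct, dotProduct_smul, smul_eq_mul,
    hM.dotProduct_mulVec_comm v u]
  ring

lemma Matrix.IsSymm.two_mul_dotProduct_mulVec_le (hM : M.IsSymm)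
    (hq : ∀ v ∈ K, |v ⬝ᵥ (M *ᵥ v)| ≤ α * (v ⬝ᵥ v)) {u v : ι → ℝ} (hu : u ∈ K) (hv : v ∈ K)
    (r : ℝ) : 2 * r * (u ⬝ᵥ (M *ᵥ v)) ≤ α * (r ^ 2 * (v ⬝ᵥ v) + u ⬝ᵥ u) := by
  have hplus := (abs_le.mp (hq _ (K.add_mem (K.smul_mem r hv) hu))).2
  have hminus := (abs_le.mp (hq _ (K.sub_mem (K.smul_mem r hv) hu))).1
  have hpar : (r • v + u) ⬝ᵥ (r • v + u) + (r • v - u) ⬝ᵥ (r • v - u)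
      = 2 * (r ^ 2 * (v ⬝ᵥ v) + u ⬝ᵥ u) := by
    simp only [add_dotProduct, sub_dotProduct, dotProduct_add, dotProduct_sub, smul_dotProduct,
      dotProduct_smul, smul_eq_mul, dotProduct_comm u v]
    ring
  have := hM.dotProduct_mulVec_polarization u v r
  linarith [congrArg (α * ·) hpar]

-- Apply the polarization bound to `u = M v` with `r = 1` (for `α ≤ 0`) and `r = α` (for `0 < α`).
lemma Matrix.IsSymm.dotProduct_mulVec_self_le (hM : M.IsSymm) (hK : ∀ v ∈ K, M *ᵥ v ∈ K)
    (hq : ∀ v ∈ K, |v ⬝ᵥ (M *ᵥ v)| ≤ α * (v ⬝ᵥ v)) {v : ι → ℝ} (hv : v ∈ K) :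
    (M *ᵥ v) ⬝ᵥ (M *ᵥ v) ≤ α ^ 2 * (v ⬝ᵥ v) := by
  have h1 := hM.two_mul_dotProduct_mulVec_le hq (hK v hv) hv 1
  have hα := hM.two_mul_dotProduct_mulVec_le hq (hK v hv) hv α
  have ha : 0 ≤ v ⬝ᵥ v := by simpa using dotProduct_self_star_nonneg v
  have hb : 0 ≤ (M *ᵥ v) ⬝ᵥ (M *ᵥ v) := by simpa using dotProduct_self_star_nonneg (M *ᵥ v)
  rcases le_or_gt α 0 with hα0 | hα0
  · nlinarith
  · nlinarith

variable [DecidableEq ι]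

lemma Matrix.IsSymm.dotProduct_pow_mulVec_self_le (hM : M.IsSymm) (hK : ∀ v ∈ K, M *ᵥ v ∈ K)
    (hq : ∀ v ∈ K, |v ⬝ᵥ (M *ᵥ v)| ≤ α * (v ⬝ᵥ v)) {v : ι → ℝ} (hv : v ∈ K) (t : ℕ) :
    (M ^ t *ᵥ v) ⬝ᵥ (M ^ t *ᵥ v) ≤ α ^ (2 * t) * (v ⬝ᵥ v) := by
  induction t with
  | zero => simp
  | succ t ih =>
    rw [pow_succ', ← mulVec_mulVec, mul_add, pow_add, mul_one, mul_comm (α ^ _), mul_assoc]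
    exact (hM.dotProduct_mulVec_self_le hK hq (pow_mulVec_mem hK hv t)).trans (by gcongr)

-- `1 - N` kills the constant part of `v`, and on the mean-zero part `N` is a `c`-contraction.
lemma dotProduct_one_sub_mulVec_self_le {N : Matrix ι ι ℝ} (hN1 : N *ᵥ 1 = 1) {c : ℝ}
    (hc : 0 ≤ c) (hN : ∀ p ∈ sumZero ι, (N *ᵥ p) ⬝ᵥ (N *ᵥ p) ≤ c ^ 2 * (p ⬝ᵥ p))
    (v : ι → ℝ) : ((1 - N) *ᵥ v) ⬝ᵥ ((1 - N) *ᵥ v) ≤ (1 + c) ^ 2 * (v ⬝ᵥ v) := by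
  set m := (∑ i, v i) / Fintype.card ι
  set p := v - fun _ => m
  have hp : p ∈ sumZero ι := sub_mean_mem_sumZero v
  have hvp : v = p + m • 1 := by ext; simp [p]
  have hNv : (1 - N) *ᵥ v = p - N *ᵥ p := by
    rw [hvp, sub_mulVec, one_mulVec, mulVec_add, mulVec_smul, hN1]; abel
  rw [hNv]
  calc _ ≤ (1 + c) ^ 2 * (p ⬝ᵥ p) := dotProduct_self_sub_le hc (hN p hp)
    _ ≤ _ := by gcongr; exact dotProduct_self_le_of_sub_mem_sumZero hp hvp

end Contraction

section Noise

variable {Ω ι κ : Type*} [Fintype ι] [MeasurableSpace Ω] {μ : Measure Ω} {X : Ω → ι → ℝ}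

lemma memLp_mulVec_apply {p : ENNReal} (hX : ∀ j, MemLp (fun ω => X ω j) p μ)
    (B : Matrix κ ι ℝ) (i : κ) : MemLp (fun ω => (B *ᵥ X ω) i) p μ :=
  memLp_finsetSum _ fun j _ => (hX j).const_mul (B i j)

lemma integrable_mulVec_apply (hX : ∀ j, Integrable (fun ω => X ω j) μ) (B : Matrix κ ι ℝ)
    (i : κ) : Integrable (fun ω => (B *ᵥ X ω) i) μ :=
  integrable_finsetSum _ fun j _ => (hX j).const_mul (B i j)

lemma integral_mulVec_apply_eq_zero (hX : ∀ j, Integrable (fun ω => X ω j) μ)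
    (hX0 : ∀ j, ∫ ω, X ω j ∂μ = 0) (B : Matrix κ ι ℝ) (i : κ) :
    ∫ ω, (B *ᵥ X ω) i ∂μ = 0 := by
  simp only [mulVec, dotProduct]
  rw [integral_finsetSum _ fun j _ => (hX j).const_mul _]
  simp [integral_const_mul, hX0]

lemma integral_sum_sq_mulVec_le (hX : ∀ j, MemLp (fun ω => X ω j) 2 μ) {B : Matrix κ ι ℝ}
    [Fintype κ] {C : ℝ} (hB : ∀ v, ∑ i, (B *ᵥ v) i ^ 2 ≤ C * ∑ j, v j ^ 2) :
    ∫ ω, ∑ i, (B *ᵥ X ω) i ^ 2 ∂μ ≤ C * ∫ ω, ∑ j, X ω j ^ 2 ∂μ := by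
  rw [← integral_const_mul]
  exact integral_mono
    (integrable_finsetSum _ fun i _ => (memLp_mulVec_apply hX B i).integrable_sq)
    ((integrable_finsetSum _ fun j _ => (hX j).integrable_sq).const_mul C) fun ω => hB (X ω)

lemma integral_sum_sq_diagonal_mulVec [DecidableEq ι]
    (hX : ∀ j, Integrable (fun ω => X ω j ^ 2) μ) (σ : ι → ℝ) :
    ∫ ω, ∑ i, (diagonal σ *ᵥ X ω) i ^ 2 ∂μ = ∑ i, σ i ^ 2 * ∫ ω, X ω i ^ 2 ∂μ := by
  simp only [mulVec_diagonal, mul_pow]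
  rw [integral_finsetSum _ fun i _ => (hX i).const_mul _]
  simp only [integral_const_mul]

variable [IsProbabilityMeasure μ]

lemma integral_const_sub_sq {f : Ω → ℝ} (hf : MemLp f 2 μ) (hf0 : ∫ ω, f ω ∂μ = 0) (a : ℝ) :
    ∫ ω, (a - f ω) ^ 2 ∂μ = a ^ 2 + ∫ ω, f ω ^ 2 ∂μ := by
  have hf1 : Integrable f μ := hf.integrable one_le_two
  have hf2 : Integrable (fun ω => f ω ^ 2) μ := hf.integrable_sq
  have : (fun ω => (a - f ω) ^ 2) = fun ω => a ^ 2 + f ω ^ 2 - 2 * a * f ω := by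
    ext ω; ring
  have hsum : Integrable (fun ω => a ^ 2 + f ω ^ 2) μ := (integrable_const _).add hf2
  rw [this, integral_sub hsum (hf1.const_mul _), integral_add (integrable_const _) hf2,
    integral_const_mul, hf0]
  simp

lemma integral_const_sub_mulVec_apply (hX : ∀ j, Integrable (fun ω => X ω j) μ)
    (hX0 : ∀ j, ∫ ω, X ω j ∂μ = 0) (a : κ → ℝ) (B : Matrix κ ι ℝ) (i : κ) :
    ∫ ω, (a - B *ᵥ X ω) i ∂μ = a i := by
  simp only [Pi.sub_apply]
  rw [integral_sub (integrable_const _) (integrable_mulVec_apply hX B i),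
    integral_mulVec_apply_eq_zero hX hX0]
  simp

lemma integral_sum_sq_sub_mulVec [Fintype κ] (hX : ∀ j, MemLp (fun ω => X ω j) 2 μ)
    (hX0 : ∀ j, ∫ ω, X ω j ∂μ = 0) (a : κ → ℝ) (B : Matrix κ ι ℝ) :
    ∫ ω, ∑ i, (a - B *ᵥ X ω) i ^ 2 ∂μ = ∑ i, a i ^ 2 + ∫ ω, ∑ i, (B *ᵥ X ω) i ^ 2 ∂μ := by
  have hBX := memLp_mulVec_apply hX B
  have hBX0 := integral_mulVec_apply_eq_zero (fun j => (hX j).integrable one_le_two) hX0 B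
  simp only [Pi.sub_apply]
  rw [integral_finsetSum (f := fun i ω => (a i - (B *ᵥ X ω) i) ^ 2) _
      fun i _ => ((memLp_const (a i)).sub (hBX i)).integrable_sq,
    integral_finsetSum _ fun i _ => (hBX i).integrable_sq, ← Finset.sum_add_distrib]
  exact Finset.sum_congr rfl fun i _ => integral_const_sub_sq (hBX i) (hBX0 i) (a i)

lemma Matrix.IsSymm.integral_sum_sq_pow_mulVec_sub_le [DecidableEq ι] {M : Matrix ι ι ℝ}
    (hM : M.IsSymm) (hM1 : M *ᵥ 1 = 1) {α : ℝ} (hα : 0 ≤ α)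
    (hq : ∀ v ∈ sumZero ι, |v ⬝ᵥ (M *ᵥ v)| ≤ α * (v ⬝ᵥ v)) {z₀ : ι → ℝ} (hz₀ : z₀ ∈ sumZero ι)
    (hX : ∀ j, MemLp (fun ω => X ω j) 2 μ) (hX0 : ∀ j, ∫ ω, X ω j ∂μ = 0) (t : ℕ) :
    ∫ ω, ∑ i, (M ^ t *ᵥ z₀ - (1 - M ^ t) *ᵥ X ω : ι → ℝ) i ^ 2 ∂μ
      ≤ α ^ (2 * t) * ∑ i, z₀ i ^ 2 + (1 + α ^ t) ^ 2 * ∫ ω, ∑ i, X ω i ^ 2 ∂μ := by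
  have hK : ∀ v ∈ sumZero ι, M *ᵥ v ∈ sumZero ι := fun v hv => hM.mulVec_mem_sumZero hM1 hv
  rw [integral_sum_sq_sub_mulVec hX hX0]
  gcongr
  · simpa only [dotProduct_self_eq_sum_sq] using hM.dotProduct_pow_mulVec_self_le hK hq hz₀ t
  · refine integral_sum_sq_mulVec_le hX fun v => ?_
    simp only [← dotProduct_self_eq_sum_sq]
    refine dotProduct_one_sub_mulVec_self_le (pow_mulVec_eq_self hM1 t) (pow_nonneg hα t)
      (fun p hp => ?_) v
    simpa only [← pow_mul, mul_comm t] using hM.dotProduct_pow_mulVec_self_le hK hq hp t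

end Noise

section Consensus

variable {ι : Type*} [Fintype ι] [DecidableEq ι] {L : Matrix ι ι ℝ}

lemma abs_dotProduct_one_sub_mulVec_le {lam2 lamn : ℝ}
    (hspec : ∀ v : ι → ℝ, ∑ i, v i = 0 →
      lam2 * ∑ i, v i ^ 2 ≤ v ⬝ᵥ (L *ᵥ v) ∧ v ⬝ᵥ (L *ᵥ v) ≤ lamn * ∑ i, v i ^ 2)
    {v : ι → ℝ} (hv : v ∈ sumZero ι) :
    |v ⬝ᵥ ((1 - L) *ᵥ v)| ≤ max |1 - lam2| |1 - lamn| * (v ⬝ᵥ v) := by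
  obtain ⟨hlo, hhi⟩ := hspec v hv
  rw [← dotProduct_self_eq_sum_sq] at hlo hhi
  have h2 : 1 - lam2 ≤ max |1 - lam2| |1 - lamn| := (le_abs_self _).trans (le_max_left _ _)
  have hn : -max |1 - lam2| |1 - lamn| ≤ 1 - lamn :=
    (neg_le_neg (le_max_right _ _)).trans (neg_abs_le _)
  have ha : 0 ≤ v ⬝ᵥ v := by simpa using dotProduct_self_star_nonneg v
  rw [sub_mulVec, one_mulVec, dotProduct_sub, abs_le]
  constructor <;> nlinarith

lemma sub_const_eq_pow_mulVec_sub_of_succ_eq (hL1 : L *ᵥ 1 = 0) {x : ℕ → ι → ℝ}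
    {x₀ w : ι → ℝ} (c : ℝ) (h0 : x 0 = x₀) (hsucc : ∀ t, x (t + 1) = (1 - L) *ᵥ x t - L *ᵥ w)
    (t : ℕ) : (x t - fun _ => c) = (1 - L) ^ t *ᵥ (x₀ - fun _ => c) - (1 - (1 - L) ^ t) *ᵥ w := by
  have hLc : L *ᵥ (fun _ => c) = 0 := by
    rw [show (fun _ => c) = c • (1 : ι → ℝ) by ext; simp, mulVec_smul, hL1, smul_zero]
  refine eq_pow_mulVec_sub_of_succ_eq (z := fun t => x t - fun _ => c) (by rw [h0])
    (fun t => ?_) t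
  simp only [hsucc, sub_sub_cancel, mulVec_sub, sub_mulVec, one_mulVec, hLc, sub_zero]
  abel

lemma max_abs_one_sub_lt_one {a b : ℝ} (ha : 0 < a) (hab : a ≤ b) (hb : b < 2) :
    max |1 - a| |1 - b| < 1 :=
  max_lt (abs_lt.2 ⟨by linarith, by linarith⟩) (abs_lt.2 ⟨by linarith, by linarith⟩)

end Consensus

section Limits

variable {ι : Type*} [Fintype ι]

lemma tendsto_zero_of_dotProduct_self_le {v : ℕ → ι → ℝ} {α C : ℝ} (hα0 : 0 ≤ α)
    (hα1 : α < 1) (hv : ∀ t, v t ⬝ᵥ v t ≤ α ^ (2 * t) * C) : Tendsto v atTop (nhds 0) := by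
  have hC : Tendsto (fun t => α ^ (2 * t) * C) atTop (nhds 0) := by
    simpa [pow_mul] using
      (tendsto_pow_atTop_nhds_zero_of_lt_one (sq_nonneg α) (by nlinarith)).mul_const C
  refine tendsto_pi_nhds.2 fun i => ?_
  have hsq : Tendsto (fun t => v t i ^ 2) atTop (nhds 0) := by
    refine squeeze_zero (fun t => sq_nonneg _) (fun t => ?_) hC
    calc v t i ^ 2 ≤ ∑ j, v t j ^ 2 :=
          Finset.single_le_sum (fun j _ => sq_nonneg (v t j)) (Finset.mem_univ i)
      _ = v t ⬝ᵥ v t := (dotProduct_self_eq_sum_sq _).symm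
      _ ≤ _ := hv t
  have habs := hsq.sqrt
  simp only [Real.sqrt_sq_eq_abs, Real.sqrt_zero] at habs
  exact (tendsto_zero_iff_abs_tendsto_zero _).2 habs

lemma tendsto_pow_mul_add_one_add_pow_sq_mul {α : ℝ} (hα0 : 0 ≤ α) (hα1 : α < 1) (C S : ℝ) :
    Tendsto (fun t => α ^ (2 * t) * C + (1 + α ^ t) ^ 2 * S) atTop (nhds S) := by
  have hαt := tendsto_pow_atTop_nhds_zero_of_lt_one hα0 hα1
  have := ((hαt.pow 2).mul_const C).add
    (((tendsto_const_nhds (x := (1 : ℝ))).add hαt).pow 2 |>.mul_const S)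
  simpa [← pow_mul, mul_comm] using this

lemma limsup_le_of_le_of_tendsto {f g : ℕ → ℝ} {b S : ℝ} (hf : ∀ t, b ≤ f t)
    (hfg : ∀ t, f t ≤ g t) (hg : Tendsto g atTop (nhds S)) : limsup f atTop ≤ S :=
  (limsup_le_limsup (Eventually.of_forall hfg) (isCoboundedUnder_le_of_le atTop hf)
    hg.isBoundedUnder_le).trans hg.limsup_eq.le

end Limits

theorem consensus_mean_and_mse_general
    {n : ℕ} {Ω : Type*} [MeasurableSpace Ω]
    (μ : Measure Ω) [IsProbabilityMeasure μ]
    (L : Matrix (Fin n) (Fin n) ℝ) (hsymm : L.IsSymm)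
    (hLone : (L *ᵥ fun _ => (1 : ℝ)) = 0)
    (lam2 lamn : ℝ) (hlam2 : 0 < lam2) (hlamn : lamn < 2) (hle : lam2 ≤ lamn)
    (hspec : ∀ v : Fin n → ℝ, (∑ i, v i) = 0 →
      lam2 * (∑ i, v i ^ 2) ≤ v ⬝ᵥ (L *ᵥ v) ∧ v ⬝ᵥ (L *ᵥ v) ≤ lamn * (∑ i, v i ^ 2))
    (α : ℝ) (hα : α = max |1 - lam2| |1 - lamn|)
    (σv : Fin n → ℝ) (η : Ω → Fin n → ℝ)
    (hmeas : ∀ i, Measurable fun ω => η ω i)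
    (hmean : ∀ i, ∫ ω, η ω i ∂μ = 0)
    (hL2 : ∀ i, Integrable (fun ω => (η ω i) ^ 2) μ)
    (x0 : Fin n → ℝ) (x : ℕ → Ω → Fin n → ℝ)
    (hx0 : ∀ ω, x 0 ω = x0)
    (hx : ∀ t ω, x (t + 1) ω = (1 - L) *ᵥ x t ω - L *ᵥ (Matrix.diagonal σv *ᵥ η ω))
    (xbar : ℝ) (hxbar : xbar = (∑ i, x0 i) / n)
    (z : ℕ → Ω → Fin n → ℝ) (hz : ∀ t ω, z t ω = x t ω - fun _ => xbar)
    (z0 : Fin n → ℝ) (hz0 : z0 = x0 - fun _ => xbar)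
    (J : Matrix (Fin n) (Fin n) ℝ) (hJ : ∀ i j, J i j = 1) :
    (∀ t i, ∫ ω, z t ω i ∂μ = ((1 - L - (lam2 / n) • J) ^ t *ᵥ z0) i) ∧
    Filter.Tendsto (fun t => (1 - L - (lam2 / n) • J) ^ t *ᵥ z0)
      Filter.atTop (nhds 0) ∧
    (∀ t, ∫ ω, ∑ i, (z t ω i) ^ 2 ∂μ ≤
      α ^ (2 * t) * (∑ i, z0 i ^ 2)
        + (1 + α ^ t) ^ 2 * ∑ i, σv i ^ 2 * ∫ ω, (η ω i) ^ 2 ∂μ) ∧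
    Filter.limsup (fun t => ∫ ω, ∑ i, (z t ω i) ^ 2 ∂μ) Filter.atTop ≤
      ∑ i, σv i ^ 2 * ∫ ω, (η ω i) ^ 2 ∂μ := by
  have hL1 : L *ᵥ 1 = 0 := hLone
  set M : Matrix (Fin n) (Fin n) ℝ := 1 - L
  have hM : M.IsSymm := isSymm_one.sub hsymm
  have hM1 : M *ᵥ 1 = 1 := by rw [sub_mulVec, one_mulVec, hL1, sub_zero]
  have hK : ∀ v ∈ sumZero (Fin n), M *ᵥ v ∈ sumZero (Fin n) := fun _ =>
    hM.mulVec_mem_sumZero hM1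
  have hq : ∀ v ∈ sumZero (Fin n), |v ⬝ᵥ (M *ᵥ v)| ≤ α * (v ⬝ᵥ v) :=
    hα ▸ fun v => abs_dotProduct_one_sub_mulVec_le hspec
  have hα0 : 0 ≤ α := hα ▸ (abs_nonneg _).trans (le_max_left _ _)
  have hα1 : α < 1 := hα ▸ max_abs_one_sub_lt_one hlam2 hle hlamn
  have hz0K : z0 ∈ sumZero (Fin n) := by
    simpa [hz0, hxbar] using sub_mean_mem_sumZero x0
  have hη : ∀ j, MemLp (fun ω => η ω j) 2 μ := fun j =>
    (memLp_two_iff_integrable_sq (hmeas j).aestronglyMeasurable).2 (hL2 j)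
  have hw := memLp_mulVec_apply hη (diagonal σv)
  have hw0 := integral_mulVec_apply_eq_zero (fun j => (hη j).integrable one_le_two) hmean
    (diagonal σv)
  have hzt : ∀ t ω, z t ω = M ^ t *ᵥ z0 - (1 - M ^ t) *ᵥ (diagonal σv *ᵥ η ω) := fun t ω => by
    rw [hz, hz0]
    exact sub_const_eq_pow_mulVec_sub_of_succ_eq hL1 (x := (x · ω)) xbar (hx0 ω) (hx · ω) t
  have hA : ∀ t, (1 - L - (lam2 / n) • J) ^ t *ᵥ z0 = M ^ t *ᵥ z0 :=
    sub_pow_mulVec_of_mem hK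
      (fun v hv => by ext i; simp_all [mulVec, dotProduct, ← Finset.mul_sum]) hz0K
  have hmse : ∀ t, ∫ ω, ∑ i, (z t ω i) ^ 2 ∂μ ≤ α ^ (2 * t) * (∑ i, z0 i ^ 2)
      + (1 + α ^ t) ^ 2 * ∑ i, σv i ^ 2 * ∫ ω, (η ω i) ^ 2 ∂μ := fun t => by
    simp_rw [hzt]
    rw [← integral_sum_sq_diagonal_mulVec hL2 σv]
    exact hM.integral_sum_sq_pow_mulVec_sub_le hM1 hα0 hq hz0K hw hw0 t
  refine ⟨fun t i => ?_, ?_, hmse, ?_⟩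
  · rw [hA]
    simp_rw [hzt]
    exact integral_const_sub_mulVec_apply (fun j => (hw j).integrable one_le_two) hw0 _ _ i
  · exact (tendsto_congr hA).2 <| tendsto_zero_of_dotProduct_self_le hα0 hα1 fun t =>
      hM.dotProduct_pow_mulVec_self_le hK hq hz0K t
  · refine limsup_le_of_le_of_tendsto (fun t => integral_nonneg fun ω =>
      Finset.sum_nonneg fun i _ => sq_nonneg _) hmse ?_
    exact tendsto_pow_mul_add_one_add_pow_sq_mul hα0 hα1 _ _

/-- Stochastic consensus: with independent zero-mean noises `η_i`, the deviation
`z(t) = x(t) − 1 x̄₀` satisfies `E[z(t)] = (I − L − (λ₂/n) 1 1ᵀ)^t z(0) → 0` and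
`E‖z(t)‖² ≤ α^{2t}‖z(0)‖² + (1+α^t)² Σ σ_i² E[η_i²]`, hence
`limsup_t E‖z(t)‖² ≤ Σ σ_i² E[η_i²]`. -/
theorem consensus_mean_and_mse
    {n : ℕ} (hn : 1 ≤ n) {Ω : Type*} [MeasurableSpace Ω]
    (μ : Measure Ω) [IsProbabilityMeasure μ]
    (L : Matrix (Fin n) (Fin n) ℝ) (hsymm : L.IsSymm)
    (hLone : (L *ᵥ fun _ => (1 : ℝ)) = 0)
    (lam2 lamn : ℝ) (hlam2 : 0 < lam2) (hlamn : lamn < 2) (hle : lam2 ≤ lamn)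
    (hspec : ∀ v : Fin n → ℝ, (∑ i, v i) = 0 →
      lam2 * (∑ i, v i ^ 2) ≤ v ⬝ᵥ (L *ᵥ v) ∧ v ⬝ᵥ (L *ᵥ v) ≤ lamn * (∑ i, v i ^ 2))
    (α : ℝ) (hα : α = max |1 - lam2| |1 - lamn|)
    (σv : Fin n → ℝ) (η : Ω → Fin n → ℝ)
    (hmeas : ∀ i, Measurable fun ω => η ω i)
    (hindep : iIndepFun (fun i ω => η ω i) μ)
    (hmean : ∀ i, ∫ ω, η ω i ∂μ = 0)
    (hL2 : ∀ i, Integrable (fun ω => (η ω i) ^ 2) μ)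
    (x0 : Fin n → ℝ) (x : ℕ → Ω → Fin n → ℝ)
    (hx0 : ∀ ω, x 0 ω = x0)
    (hx : ∀ t ω, x (t + 1) ω = (1 - L) *ᵥ x t ω - L *ᵥ (Matrix.diagonal σv *ᵥ η ω))
    (xbar : ℝ) (hxbar : xbar = (∑ i, x0 i) / n)
    (z : ℕ → Ω → Fin n → ℝ) (hz : ∀ t ω, z t ω = x t ω - fun _ => xbar)
    (z0 : Fin n → ℝ) (hz0 : z0 = x0 - fun _ => xbar)
    (J : Matrix (Fin n) (Fin n) ℝ) (hJ : ∀ i j, J i j = 1) :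
    (∀ t i, ∫ ω, z t ω i ∂μ = ((1 - L - (lam2 / n) • J) ^ t *ᵥ z0) i) ∧
    Filter.Tendsto (fun t => (1 - L - (lam2 / n) • J) ^ t *ᵥ z0)
      Filter.atTop (nhds 0) ∧
    (∀ t, ∫ ω, ∑ i, (z t ω i) ^ 2 ∂μ ≤
      α ^ (2 * t) * (∑ i, z0 i ^ 2)
        + (1 + α ^ t) ^ 2 * ∑ i, σv i ^ 2 * ∫ ω, (η ω i) ^ 2 ∂μ) ∧
    Filter.limsup (fun t => ∫ ω, ∑ i, (z t ω i) ^ 2 ∂μ) Filter.atTop ≤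
      ∑ i, σv i ^ 2 * ∫ ω, (η ω i) ^ 2 ∂μ :=
  consensus_mean_and_mse_general μ L hsymm hLone lam2 lamn hlam2 hlamn hle hspec α hα σv η hmeas
    hmean hL2 x0 x hx0 hx xbar hxbar z hz z0 hz0 J hJ
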